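/- Let A be an n×n Hermitian matrix with a zero eigenvalue and unit eigenvector v (Av = 0, ‖v‖ = 1), and let λ_1,…,λ_{n−1} be the remaining eigenvalues with multiplicity. Let M_1 be the submatrix of A obtained by deleting the first row and first column, with v_1 the first component of v. Then det(M_1) = |v_1|² · ∏_{k=1}^{n−1} λ_k. -/

import Mathlib

open Matrix Polynomial

/-!
Write `A = U D U*` with `U` unitary and `D = diag μ`. Deleting the first row and column gives the
cofactor `adj(A)₀₀`, and `adj(A) = U adj(D) U*` yields `adj(A)₀₀ = ∑ⱼ |U₀ⱼ|² ∏_{k ≠ j} μₖ`.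
Comparing roots of the characteristic polynomial, some `μ_{i₀}` is `0` and the others are the
`λₖ`, so only the term `j = i₀` survives and it equals `|U₀ᵢ₀|² ∏ λₖ`. If `∏ λₖ = 0` we are done;
otherwise the kernel of `A` is spanned by the column `U_{·i₀}`, so the unit vector `v` is a
unimodular multiple of it and `|v₀| = |U₀ᵢ₀|`.
-/

namespace Matrix

theorem det_submatrix_succ_succ_eq_adjugate {R : Type*} [CommRing R] {n : ℕ}
    (A : Matrix (Fin (n + 1)) (Fin (n + 1)) R) :
    (A.submatrix Fin.succ Fin.succ).det = adjugate A 0 0 := by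
  simp [adjugate_fin_succ_eq_det_submatrix, Fin.succAbove_zero]

theorem adjugate_unitary_conj {R : Type*} [CommRing R] [StarRing R] {n : Type*}
    [Fintype n] [DecidableEq n] (U : unitaryGroup n R) (D : Matrix n n R) :
    adjugate ((U : Matrix n n R) * D * star (U : Matrix n n R)) =
      U * adjugate D * star (U : Matrix n n R) := by
  have hadj (V : unitaryGroup n R) :
      adjugate (V : Matrix n n R) = det (V : Matrix n n R) • star (V : Matrix n n R) := by
    rw [← Matrix.mul_one (adjugate _), ← Unitary.coe_mul_star_self V, ← Matrix.mul_assoc,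
      adjugate_mul, smul_mul, Matrix.one_mul, Unitary.coe_star]
  have hdet : det (star U : Matrix n n R) * det (U : Matrix n n R) = 1 := by
    rw [← det_mul, Unitary.coe_star_mul_self, det_one]
  rw [adjugate_mul_distrib, adjugate_mul_distrib, ← Unitary.coe_star, hadj, hadj, Unitary.coe_star,
    star_star, Matrix.smul_mul, Matrix.mul_smul, Matrix.mul_smul, smul_smul, hdet, one_smul,
    Matrix.mul_assoc]

end Matrix

theorem Finset.exists_map_univ_erase_of_cons_eq_map {ι α : Type*} [Fintype ι] [DecidableEq ι]
    {f : ι → α} {a : α} {s : Multiset α} (h : a ::ₘ s = univ.val.map f) :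
    ∃ i, f i = a ∧ (univ.erase i).val.map f = s := by
  obtain ⟨i, -, hi⟩ := Multiset.mem_map.mp (h ▸ Multiset.mem_cons_self a s)
  refine ⟨i, hi, (Multiset.cons_inj_right a).mp ?_⟩
  rw [h, ← hi, ← Multiset.map_cons, Finset.erase_val, Multiset.cons_erase (Finset.mem_univ _)]

namespace Matrix.IsHermitian

variable {𝕜 : Type*} [RCLike 𝕜] {n : Type*} [Fintype n] [DecidableEq n] {A : Matrix n n 𝕜}

theorem exists_eigenvalues_eq_zero_of_charpoly_eq_X_mul {ι : Type*} [Fintype ι]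
    (hA : A.IsHermitian) {l : ι → ℝ} (hchar : A.charpoly = X * ∏ k, (X - C (l k : 𝕜))) :
    ∃ i₀, hA.eigenvalues i₀ = 0 ∧
      ∏ j ∈ Finset.univ.erase i₀, (hA.eigenvalues j : 𝕜) = ∏ k, (l k : 𝕜) := by
  have hroots : 0 ::ₘ Finset.univ.val.map (fun k => (l k : 𝕜)) =
      Finset.univ.val.map (RCLike.ofReal ∘ hA.eigenvalues) := by
    have hprod : ∏ k, (X - C (l k : 𝕜)) ≠ 0 :=
      Finset.prod_ne_zero_iff.mpr fun k _ => X_sub_C_ne_zero _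
    rw [← hA.roots_charpoly_eq_eigenvalues, hchar, roots_mul (mul_ne_zero X_ne_zero hprod),
      roots_X, roots_prod _ _ hprod]
    simp
  obtain ⟨i₀, hi₀, hprod⟩ := Finset.exists_map_univ_erase_of_cons_eq_map hroots
  refine ⟨i₀, by simpa using hi₀, ?_⟩
  rw [Finset.prod_eq_multiset_prod, Finset.prod_eq_multiset_prod, ← hprod]
  rfl

theorem adjugate_apply_self (hA : A.IsHermitian) (i : n) :
    A.adjugate i i = ∑ j, ((‖hA.eigenvectorBasis j i‖ ^ 2 : ℝ) : 𝕜) *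
      ∏ k ∈ Finset.univ.erase j, (hA.eigenvalues k : 𝕜) := by
  conv_lhs => rw [hA.spectral_theorem, Unitary.conjStarAlgAut_apply, adjugate_unitary_conj,
    adjugate_diagonal, mul_apply]
  refine Finset.sum_congr rfl fun j _ => ?_
  rw [mul_diagonal, star_apply, eigenvectorUnitary_apply, mul_right_comm, RCLike.star_def,
    RCLike.mul_conj, RCLike.ofReal_pow]
  rfl

theorem adjugate_apply_self_of_eigenvalues_eq_zero (hA : A.IsHermitian) {i₀ : n}
    (hi₀ : hA.eigenvalues i₀ = 0) (i : n) :
    A.adjugate i i = ((‖hA.eigenvectorBasis i₀ i‖ ^ 2 : ℝ) : 𝕜) *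
      ∏ k ∈ Finset.univ.erase i₀, (hA.eigenvalues k : 𝕜) := by
  rw [hA.adjugate_apply_self, Fintype.sum_eq_single i₀ fun j hj => ?_]
  rw [Finset.prod_eq_zero (Finset.mem_erase.mpr ⟨Ne.symm hj, Finset.mem_univ i₀⟩) (by simp [hi₀]),
    mul_zero]

theorem exists_eq_smul_eigenvectorBasis_of_mulVec_eq_zero (hA : A.IsHermitian) {v : n → 𝕜}
    (hv : A *ᵥ v = 0) {i₀ : n} (hμ : ∀ j ≠ i₀, hA.eigenvalues j ≠ 0) :
    ∃ c : 𝕜, v = c • ⇑(hA.eigenvectorBasis i₀) := by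
  set U : Matrix n n 𝕜 := ↑hA.eigenvectorUnitary
  have hU : U * star U = 1 := Unitary.mul_star_self_of_mem hA.eigenvectorUnitary.2
  set w := star U *ᵥ v
  have hDw : diagonal (RCLike.ofReal ∘ hA.eigenvalues) *ᵥ w = 0 := by
    rw [← hA.conjStarAlgAut_star_eigenvectorUnitary, Unitary.conjStarAlgAut_star_apply,
      mulVec_mulVec, Matrix.mul_assoc _ U, hU, Matrix.mul_one, ← mulVec_mulVec, hv, mulVec_zero]
  have hw : w = Pi.single i₀ (w i₀) := by
    ext j
    rcases eq_or_ne j i₀ with rfl | hj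
    · simp
    · have hμw := congrFun hDw j
      simp only [mulVec_diagonal, Function.comp_apply, Pi.zero_apply, mul_eq_zero,
        RCLike.ofReal_eq_zero] at hμw
      rw [Pi.single_eq_of_ne hj]
      exact hμw.resolve_left (hμ j hj)
  refine ⟨w i₀, ?_⟩
  calc v = U *ᵥ w := by rw [mulVec_mulVec, hU, one_mulVec]
    _ = U *ᵥ Pi.single i₀ (w i₀) := by rw [← hw]
    _ = w i₀ • ⇑(hA.eigenvectorBasis i₀) := by ext i; simp [U, mulVec_single, mul_comm]

theorem norm_apply_eq_of_mulVec_eq_zero (hA : A.IsHermitian) {v : n → 𝕜}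
    (hv : A *ᵥ v = 0) (hnorm : ∑ i, ‖v i‖ ^ 2 = 1) {i₀ : n}
    (hμ : ∀ j ≠ i₀, hA.eigenvalues j ≠ 0) (i : n) :
    ‖v i‖ = ‖hA.eigenvectorBasis i₀ i‖ := by
  obtain ⟨c, rfl⟩ := hA.exists_eq_smul_eigenvectorBasis_of_mulVec_eq_zero hv hμ
  have hb : ∑ i, ‖hA.eigenvectorBasis i₀ i‖ ^ 2 = 1 := by
    rw [← EuclideanSpace.norm_sq_eq, hA.eigenvectorBasis.orthonormal.1 i₀, one_pow]
  have hc : ‖c‖ = 1 := by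
    simp only [Pi.smul_apply, smul_eq_mul, norm_mul, mul_pow, ← Finset.mul_sum, hb,
      mul_one] at hnorm
    exact (pow_eq_one_iff_of_nonneg (norm_nonneg c) two_ne_zero).mp hnorm
  simp [norm_mul, hc]

end Matrix.IsHermitian

/-- If `A` is Hermitian with eigenvalues `0, λ_1,…,λ_{n-1}` (with multiplicity) and `v`
is a unit eigenvector for `0`, then `det M₁ = |v_1|² ∏ λ_k`, where `M₁` is the
bottom-right principal submatrix deleting the first row and column. -/
theorem det_submatrix_one (n : ℕ)
    (A : Matrix (Fin (n + 1)) (Fin (n + 1)) ℂ) (hA : A.IsHermitian)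
    (l : Fin n → ℝ)
    (hchar : A.charpoly = X * ∏ k : Fin n, (X - C (l k : ℂ)))
    (v : Fin (n + 1) → ℂ)
    (hv : A *ᵥ v = 0)
    (hnorm : ∑ i, ‖v i‖ ^ 2 = 1) :
    (A.submatrix Fin.succ Fin.succ).det =
      ((‖v 0‖ ^ 2 : ℝ) : ℂ) * ∏ k : Fin n, (l k : ℂ) := by
  obtain ⟨i₀, hμ₀, hprod⟩ := hA.exists_eigenvalues_eq_zero_of_charpoly_eq_X_mul hchar
  rw [det_submatrix_succ_succ_eq_adjugate, hA.adjugate_apply_self_of_eigenvalues_eq_zero hμ₀]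
  simp only [RCLike.ofReal_eq_complex_ofReal] at hprod ⊢
  rw [hprod]
  rcases eq_or_ne (∏ k, (l k : ℂ)) 0 with h | h
  · simp [h]
  have hμ : ∀ j ≠ i₀, hA.eigenvalues j ≠ 0 := fun j hj => by
    rw [← hprod, Finset.prod_ne_zero_iff] at h
    exact_mod_cast h j (Finset.mem_erase.mpr ⟨hj, Finset.mem_univ j⟩)
  rw [hA.norm_apply_eq_of_mulVec_eq_zero hv hnorm hμ 0]
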